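/- arXiv:math/0503374 — 2 statements merged into one kernel-verified Lean document; each statement's English description precedes it below -/
import Mathlib

section
/- Let {s_a, p_A} be a representation of a weakly left-resolving labelled space (E,π,𝒞) in a C*-algebra B. For α, β, γ, δ ∈ ℒ(E,π) and A, B ∈ 𝒞 with A ⊆ r(α) ∩ r(β) and B ⊆ r(γ) ∩ r(δ): (s_α p_A s_β*)(s_γ p_B s_δ*) equals s_{αγ'} p_{r(A,γ')∩B} s_δ* if γ = βγ' for some word γ'; equals s_α p_{A ∩ r(B,β')} s_{δβ'}* if β = γβ' for some word β'; equals s_α p_{A∩B} s_δ* if β = γ; and equals 0 if neither of β, γ is an initial segment of the other. -/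
/-- A labelled graph: a directed graph with vertex type `V`, edge type `E`,
source and range maps, together with a labelling of the edges by the alphabet `A`. -/
structure LabelledGraph (V : Type*) (E : Type*) (A : Type*) where
  src : E → V
  rng : E → V
  lbl : E → A

namespace LabelledGraph

variable {V E A : Type*}

/-- A path is a nonempty list of edges such that the range of each edge is the
source of the next one. -/
def IsPath (G : LabelledGraph V E A) (l : List E) : Prop :=
  l ≠ [] ∧ l.Chain' (fun e f => G.rng e = G.src f)

/-- The language `ℒ(E,π)`: all (nonempty) words over `A` represented by some path. -/
def language (G : LabelledGraph V E A) : Set (List A) :=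
  { α | ∃ l, G.IsPath l ∧ l.map G.lbl = α }

/-- `s(α)`: sources of paths representing the word `α`. -/
def srcSet (G : LabelledGraph V E A) (α : List A) : Set V :=
  { v | ∃ l, ∃ h : G.IsPath l, l.map G.lbl = α ∧ G.src (l.head h.1) = v }

/-- `r(α)`: ranges of paths representing the word `α`. -/
def rngSet (G : LabelledGraph V E A) (α : List A) : Set V :=
  { v | ∃ l, ∃ h : G.IsPath l, l.map G.lbl = α ∧ G.rng (l.getLast h.1) = v }

/-- `r(S,α)`: the relative range of the word `α` with respect to the set `S` of vertices. -/
def relRng (G : LabelledGraph V E A) (S : Set V) (α : List A) : Set V :=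
  { v | ∃ l, ∃ h : G.IsPath l,
      l.map G.lbl = α ∧ G.src (l.head h.1) ∈ S ∧ G.rng (l.getLast h.1) = v }

/-- A labelled graph is left-resolving if the labelling is injective on the set
of incoming edges of each vertex. -/
def LeftResolving (G : LabelledGraph V E A) : Prop :=
  ∀ v : V, Set.InjOn G.lbl { e | G.rng e = v }

/-- A sink is a vertex emitting no edges. -/
def IsSink (G : LabelledGraph V E A) (v : V) : Prop := ∀ e : E, G.src e ≠ v

/-- A source is a vertex receiving no edges. -/
def IsSource (G : LabelledGraph V E A) (v : V) : Prop := ∀ e : E, G.rng e ≠ v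

/-- `L¹_S`: the letters `a` (labelled paths of length one) with `S ∩ s(a) ≠ ∅`. -/
def L1 (G : LabelledGraph V E A) (S : Set V) : Set A :=
  { a | (S ∩ G.srcSet [a]).Nonempty }

/-- `Lⁿ_S`: the words of length `n` whose source set meets `S`. -/
def Ln (G : LabelledGraph V E A) (S : Set V) (n : ℕ) : Set (List A) :=
  { α | α.length = n ∧ (S ∩ G.srcSet α).Nonempty }

/-- A collection `C` of subsets of vertices is accommodating for `G` if it contains all
ranges `r(α)`, is closed under relative ranges, and under finite intersections and unions. -/
structure Accommodating (G : LabelledGraph V E A) (C : Set (Set V)) : Prop where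
  rng_mem : ∀ α ∈ G.language, G.rngSet α ∈ C
  relRng_mem : ∀ S ∈ C, ∀ α ∈ G.language, G.relRng S α ∈ C
  inter_mem : ∀ S ∈ C, ∀ T ∈ C, S ∩ T ∈ C
  union_mem : ∀ S ∈ C, ∀ T ∈ C, S ∪ T ∈ C

/-- The labelled space `(E,π,C)` is weakly left-resolving. -/
def WeaklyLeftResolving (G : LabelledGraph V E A) (C : Set (Set V)) : Prop :=
  ∀ S ∈ C, ∀ T ∈ C, ∀ α ∈ G.language,
    G.relRng S α ∩ G.relRng T α = G.relRng (S ∩ T) α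

/-- The labelled space `(E,π,C)` is set-finite. -/
def SetFinite (G : LabelledGraph V E A) (C : Set (Set V)) : Prop :=
  ∀ S ∈ C, (G.L1 S).Finite

/-- The collection `ℰ`. -/
def calE (G : LabelledGraph V E A) : Set (Set V) :=
  { S | ∃ v, (G.IsSource v ∨ G.IsSink v) ∧ S = {v} } ∪
    (G.rngSet '' G.language) ∪ (G.srcSet '' G.language)

/-- The collection `ℰ₋`. -/
def calEminus (G : LabelledGraph V E A) : Set (Set V) :=
  { S | ∃ v, G.IsSink v ∧ S = {v} } ∪ (G.rngSet '' G.language)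

/-- `ℰ⁰`: the smallest accommodating collection containing `ℰ`. -/
def E0 (G : LabelledGraph V E A) : Set (Set V) :=
  ⋂₀ { C | G.calE ⊆ C ∧ G.Accommodating C }

/-- `ℰ⁰₋`: the smallest accommodating collection containing `ℰ₋`. -/
def E0minus (G : LabelledGraph V E A) : Set (Set V) :=
  ⋂₀ { C | G.calEminus ⊆ C ∧ G.Accommodating C }

/-- The dual labelled graph `(Ê,π̂)`: vertices are edges of `G`, edges are paths of
length two, labelled by the corresponding words of length two. -/
def dual (G : LabelledGraph V E A) :
    LabelledGraph E { ef : E × E // G.rng ef.1 = G.src ef.2 } (List A) where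
  src ef := ef.1.1
  rng ef := ef.1.2
  lbl ef := [G.lbl ef.1.1, G.lbl ef.1.2]

end LabelledGraph

/-- The product `s_{a₁} ⋯ s_{aₙ}` associated to a word `a₁⋯aₙ` (with junk value `0` on
the empty word). -/
def sWord {A B : Type*} [Mul B] [Zero B] (s : A → B) : List A → B
  | [] => 0
  | [a] => s a
  | a :: b :: l => s a * sWord s (b :: l)

namespace LabelledGraph

/-- A representation of the labelled space `(G, C)` in a C*-algebra `B`: a family of
projections `p S` for `S ∈ C` and partial isometries `s a` for `a ∈ ℒ¹` satisfying the
relations (i)-(iv). -/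
structure IsRepresentation {V E A : Type*} (G : LabelledGraph V E A) (C : Set (Set V))
    {B : Type*} [NonUnitalRing B] [StarRing B] (p : Set V → B) (s : A → B) : Prop where
  p_star : ∀ S ∈ C, star (p S) = p S
  p_idem : ∀ S ∈ C, p S * p S = p S
  s_partialIsometry : ∀ a, [a] ∈ G.language → s a * star (s a) * s a = s a
  p_empty : p ∅ = 0
  p_inter : ∀ S ∈ C, ∀ T ∈ C, p S * p T = p (S ∩ T)
  p_union : ∀ S ∈ C, ∀ T ∈ C, p (S ∪ T) = p S + p T - p (S ∩ T)
  p_mul_s : ∀ S ∈ C, ∀ a, [a] ∈ G.language → p S * s a = s a * p (G.relRng S [a])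
  star_s_mul_s : ∀ a, [a] ∈ G.language → star (s a) * s a = p (G.rngSet [a])
  s_orth : ∀ a b, [a] ∈ G.language → [b] ∈ G.language → a ≠ b → star (s a) * s b = 0
  cuntz_krieger : ∀ S ∈ C, ∀ hfin : (G.L1 S).Finite, (G.L1 S).Nonempty →
    p S = ∑ a ∈ hfin.toFinset, s a * p (G.relRng S [a]) * star (s a)

end LabelledGraph

/-- The C*-subalgebra of `B` generated by a set, as a subset of `B`: the closure of the
non-unital star subalgebra generated by the set. -/
def genCStar (B : Type*) [NonUnitalCStarAlgebra B] (gens : Set B) : Set B :=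
  closure (NonUnitalStarAlgebra.adjoin ℂ gens : Set B)

/-- An action of the circle group `𝕋` by *-automorphisms on `B`, strongly continuous. -/
structure CircleAction (B : Type*) [NonUnitalCStarAlgebra B] where
  act : Circle → B → B
  act_one : act 1 = id
  act_mul : ∀ z w, act (z * w) = act z ∘ act w
  act_bijective : ∀ z, Function.Bijective (act z)
  map_add : ∀ z x y, act z (x + y) = act z x + act z y
  map_mul : ∀ z x y, act z (x * y) = act z x * act z y
  map_smul : ∀ z (c : ℂ) x, act z (c • x) = c • act z x
  map_star : ∀ z x, act z (star x) = star (act z x)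
  continuous : ∀ x, Continuous fun z => act z x

/-- A gauge action for a representation `{s_a, p_A}`: the circle action fixes the
projections and scales the partial isometries. -/
def IsGaugeAction {V E A : Type*} (G : LabelledGraph V E A) (C : Set (Set V))
    {B : Type*} [NonUnitalCStarAlgebra B] (p : Set V → B) (s : A → B)
    (γ : CircleAction B) : Prop :=
  (∀ z a, [a] ∈ G.language → γ.act z (s a) = (z : ℂ) • s a) ∧
  (∀ z, ∀ S ∈ C, γ.act z (p S) = p S)

/-- A Cuntz–Krieger family for the directed graph underlying `G`. -/
structure IsCKFamily {V E A : Type*} (G : LabelledGraph V E A)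
    {B : Type*} [NonUnitalRing B] [StarRing B] (p : V → B) (s : E → B) : Prop where
  p_star : ∀ v, star (p v) = p v
  p_idem : ∀ v, p v * p v = p v
  p_orth : ∀ v w, v ≠ w → p v * p w = 0
  star_s_mul_s : ∀ e, star (s e) * s e = p (G.rng e)
  s_orth : ∀ e f, e ≠ f → star (s e) * s f = 0
  cuntz_krieger : ∀ v, (∃ e, G.src e = v) → ∀ hfin : {e | G.src e = v}.Finite,
    p v = ∑ e ∈ hfin.toFinset, s e * star (s e)

section Aux

namespace LabelledGraph

variable {V E A : Type*} {G : LabelledGraph V E A}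

lemma lang_ne_nil {α : List A} (h : α ∈ G.language) : α ≠ [] := by
  obtain ⟨l, hl, rfl⟩ := h
  simpa using hl.1

lemma getLast_append_right {l₁ l₂ : List E} (h : l₁ ++ l₂ ≠ []) (h₂ : l₂ ≠ []) :
    (l₁ ++ l₂).getLast h = l₂.getLast h₂ :=
  List.getLast_append_of_ne_nil h h₂

lemma path_split {l : List E} (h : G.IsPath l) {α β : List A} (hαβ : l.map G.lbl = α ++ β)
    (hα : α ≠ []) (hβ : β ≠ []) :
    ∃ (l₁ l₂ : List E) (h₁ : G.IsPath l₁) (h₂ : G.IsPath l₂),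
      l = l₁ ++ l₂ ∧ l₁.map G.lbl = α ∧ l₂.map G.lbl = β ∧
      G.rng (l₁.getLast h₁.1) = G.src (l₂.head h₂.1) := by
  set l₁ := l.take α.length with hl₁def
  set l₂ := l.drop α.length with hl₂def
  have hl : l = l₁ ++ l₂ := (List.take_append_drop _ _).symm
  have hm₁ : l₁.map G.lbl = α := by
    rw [hl₁def, List.map_take, hαβ, List.take_left' rfl]
  have hm₂ : l₂.map G.lbl = β := by
    rw [hl₂def, List.map_drop, hαβ, List.drop_left' rfl]
  have hne₁ : l₁ ≠ [] := fun hh => hα (by rw [← hm₁, hh]; rfl)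
  have hne₂ : l₂ ≠ [] := fun hh => hβ (by rw [← hm₂, hh]; rfl)
  have hch := h.2
  rw [hl] at hch
  obtain ⟨hc₁, hc₂, hj⟩ := List.isChain_append.1 hch
  refine ⟨l₁, l₂, ⟨hne₁, hc₁⟩, ⟨hne₂, hc₂⟩, hl, hm₁, hm₂, ?_⟩
  exact hj _ (List.getLast?_eq_getLast hne₁) _ (List.head?_eq_head hne₂)

lemma IsPath.append_path {l₁ l₂ : List E} (h₁ : G.IsPath l₁) (h₂ : G.IsPath l₂)
    (hj : G.rng (l₁.getLast h₁.1) = G.src (l₂.head h₂.1)) : G.IsPath (l₁ ++ l₂) := by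
  refine ⟨by simp [h₁.1], List.isChain_append.2 ⟨h₁.2, h₂.2, ?_⟩⟩
  intro x hx y hy
  rw [List.getLast?_eq_getLast h₁.1] at hx
  rw [List.head?_eq_head h₂.1] at hy
  cases hx; cases hy; exact hj

lemma lang_split {α β : List A} (h : (α ++ β) ∈ G.language) (hα : α ≠ []) (hβ : β ≠ []) :
    α ∈ G.language ∧ β ∈ G.language := by
  obtain ⟨l, hl, hmap⟩ := h
  obtain ⟨l₁, l₂, h₁, h₂, rfl, hm₁, hm₂, hj⟩ := path_split hl hmap hα hβ
  exact ⟨⟨l₁, h₁, hm₁⟩, ⟨l₂, h₂, hm₂⟩⟩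

lemma relRng_append {S : Set V} {α β : List A} (hα : α ≠ []) (hβ : β ≠ []) :
    G.relRng S (α ++ β) = G.relRng (G.relRng S α) β := by
  ext v
  constructor
  · rintro ⟨l, h, hmap, hsrc, hrng⟩
    obtain ⟨l₁, l₂, h₁, h₂, rfl, hm₁, hm₂, hj⟩ := path_split h hmap hα hβ
    refine ⟨l₂, h₂, hm₂, ⟨l₁, h₁, hm₁, ?_, hj⟩, ?_⟩
    · have he : (l₁ ++ l₂).head h.1 = l₁.head h₁.1 := List.head_append_left h₁.1
      rwa [he] at hsrc
    · have he : (l₁ ++ l₂).getLast h.1 = l₂.getLast h₂.1 :=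
        LabelledGraph.getLast_append_right h.1 h₂.1
      rwa [he] at hrng
  · rintro ⟨l₂, h₂, hm₂, ⟨l₁, h₁, hm₁, hsrc₁, hj⟩, hrng₂⟩
    have hap := h₁.append_path h₂ hj
    refine ⟨l₁ ++ l₂, hap, by rw [List.map_append, hm₁, hm₂], ?_, ?_⟩
    · rw [show (l₁ ++ l₂).head hap.1 = l₁.head h₁.1 from List.head_append_left h₁.1]
      exact hsrc₁
    · rw [getLast_append_right hap.1 h₂.1]
      exact hrng₂

lemma rngSet_eq_relRng_univ (α : List A) : G.rngSet α = G.relRng Set.univ α := by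
  ext v
  constructor
  · rintro ⟨l, h, hm, hr⟩; exact ⟨l, h, hm, trivial, hr⟩
  · rintro ⟨l, h, hm, -, hr⟩; exact ⟨l, h, hm, hr⟩

lemma relRng_mono {S T : Set V} (hST : S ⊆ T) (α : List A) :
    G.relRng S α ⊆ G.relRng T α := by
  rintro v ⟨l, h, hm, hs, hr⟩; exact ⟨l, h, hm, hST hs, hr⟩

lemma relRng_subset_rngSet (S : Set V) (α : List A) : G.relRng S α ⊆ G.rngSet α := by
  rw [rngSet_eq_relRng_univ]
  exact relRng_mono (Set.subset_univ S) α

lemma rngSet_append {α β : List A} (hα : α ≠ []) (hβ : β ≠ []) :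
    G.rngSet (α ++ β) = G.relRng (G.rngSet α) β := by
  rw [rngSet_eq_relRng_univ, relRng_append hα hβ, ← rngSet_eq_relRng_univ]

end LabelledGraph

lemma sWord_cons {A B : Type*} [Mul B] [Zero B] (s : A → B) (a : A) {l : List A}
    (h : l ≠ []) : sWord s (a :: l) = s a * sWord s l := by
  cases l with
  | nil => exact absurd rfl h
  | cons b t => rfl

lemma sWord_append {A B : Type*} [Semigroup B] [Zero B] (s : A → B) {l₁ l₂ : List A}
    (h₁ : l₁ ≠ []) (h₂ : l₂ ≠ []) :
    sWord s (l₁ ++ l₂) = sWord s l₁ * sWord s l₂ := by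
  induction l₁ with
  | nil => exact absurd rfl h₁
  | cons a t ih =>
    cases t with
    | nil => exact sWord_cons s a h₂
    | cons b u =>
      rw [List.cons_append, sWord_cons s a (by simp), ih (by simp), sWord_cons s a (by simp),
        mul_assoc]

end Aux
section RepAux

open LabelledGraph

variable {V E A : Type*} {B : Type*} [NonUnitalRing B] [StarRing B]
  {G : LabelledGraph V E A} {C : Set (Set V)} {p : Set V → B} {s : A → B}

lemma p_mul_sWord (hC : G.Accommodating C) (hrep : G.IsRepresentation C p s)
    {β : List A} (hβ : β ∈ G.language) {S : Set V} (hS : S ∈ C) :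
    p S * sWord s β = sWord s β * p (G.relRng S β) := by
  induction β generalizing S with
  | nil => exact absurd rfl (lang_ne_nil hβ)
  | cons a t ih =>
    cases t with
    | nil => exact hrep.p_mul_s S hS a hβ
    | cons b u =>
      have hsplit := lang_split (G := G) (α := [a]) (β := b :: u) hβ (by simp) (by simp)
      have ha : [a] ∈ G.language := hsplit.1
      have ht : (b :: u) ∈ G.language := hsplit.2
      have h1 : G.relRng S [a] ∈ C := hC.relRng_mem S hS [a] ha
      have hre : G.relRng S (a :: b :: u) = G.relRng (G.relRng S [a]) (b :: u) :=
        relRng_append (α := [a]) (β := b :: u) (by simp) (by simp)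
      rw [sWord_cons s a (by simp), ← mul_assoc, hrep.p_mul_s S hS a ha, mul_assoc,
        ih ht h1, ← mul_assoc, ← sWord_cons s a (by simp), hre]

lemma star_sWord_mul_sWord (hC : G.Accommodating C) (hrep : G.IsRepresentation C p s)
    {β : List A} (hβ : β ∈ G.language) :
    star (sWord s β) * sWord s β = p (G.rngSet β) := by
  induction β with
  | nil => exact absurd rfl (lang_ne_nil hβ)
  | cons a t ih =>
    cases t with
    | nil => exact hrep.star_s_mul_s a hβ
    | cons b u =>
      have hsplit := lang_split (G := G) (α := [a]) (β := b :: u) hβ (by simp) (by simp)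
      have ha : [a] ∈ G.language := hsplit.1
      have ht : (b :: u) ∈ G.language := hsplit.2
      have hra : G.rngSet [a] ∈ C := hC.rng_mem [a] ha
      have hrt : G.rngSet (b :: u) ∈ C := hC.rng_mem _ ht
      have hrel : G.relRng (G.rngSet [a]) (b :: u) ∈ C := hC.relRng_mem _ hra _ ht
      have hset : G.rngSet (b :: u) ∩ G.relRng (G.rngSet [a]) (b :: u)
          = G.rngSet (a :: b :: u) := by
        rw [Set.inter_eq_self_of_subset_right (relRng_subset_rngSet _ _)]
        exact (rngSet_append (α := [a]) (β := b :: u) (by simp) (by simp)).symm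
      rw [sWord_cons s a (by simp), star_mul, mul_assoc, ← mul_assoc (star (s a)),
        hrep.star_s_mul_s a ha, p_mul_sWord hC hrep ht hra, ← mul_assoc,
        ih ht, hrep.p_inter _ hrt _ hrel, hset]

lemma star_sWord_mul_sWord_orth (hC : G.Accommodating C)
    (hrep : G.IsRepresentation C p s) {β γ : List A}
    (hβ : β ∈ G.language) (hγ : γ ∈ G.language)
    (h1 : ¬ β <+: γ) (h2 : ¬ γ <+: β) : star (sWord s β) * sWord s γ = 0 := by
  induction β generalizing γ with
  | nil => exact absurd rfl (lang_ne_nil hβ)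
  | cons a t ih =>
    cases γ with
    | nil => exact absurd rfl (lang_ne_nil hγ)
    | cons c w =>
      by_cases hac : a = c
      · subst hac
        have ht : t ≠ [] := by
          rintro rfl
          exact h1 (by simp)
        have hw : w ≠ [] := by
          rintro rfl
          exact h2 (by simp)
        have hsplitβ := lang_split (G := G) (α := [a]) (β := t) hβ (by simp) ht
        have hsplitγ := lang_split (G := G) (α := [a]) (β := w) hγ (by simp) hw
        have ha : [a] ∈ G.language := hsplitβ.1
        have hra : G.rngSet [a] ∈ C := hC.rng_mem [a] ha
        have hpt : ¬ t <+: w := fun hh => h1 (by simp [hh])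
        have hpw : ¬ w <+: t := fun hh => h2 (by simp [hh])
        rw [sWord_cons s a ht, sWord_cons s a hw, star_mul, mul_assoc,
          ← mul_assoc (star (s a)), hrep.star_s_mul_s a ha,
          p_mul_sWord hC hrep hsplitγ.2 hra, ← mul_assoc,
          ih hsplitβ.2 hsplitγ.2 hpt hpw, zero_mul]
      · -- a ≠ c
        have hac' : star (s a) * s c = 0 := by
          cases t with
          | nil =>
            cases w with
            | nil => exact hrep.s_orth a c hβ hγ hac
            | cons b' u' =>
              have := lang_split (G := G) (α := [c]) (β := b' :: u') hγ (by simp) (by simp)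
              exact hrep.s_orth a c hβ this.1 hac
          | cons b u =>
            have hβ1 := (lang_split (G := G) (α := [a]) (β := b :: u) hβ (by simp) (by simp)).1
            cases w with
            | nil => exact hrep.s_orth a c hβ1 hγ hac
            | cons b' u' =>
              have hγ1 := (lang_split (G := G) (α := [c]) (β := b' :: u') hγ (by simp) (by simp)).1
              exact hrep.s_orth a c hβ1 hγ1 hac
        cases t with
        | nil =>
          cases w with
          | nil => exact hac'
          | cons b' u' =>
            rw [sWord_cons s c (by simp), ← mul_assoc]
            show star (s a) * s c * _ = 0
            rw [hac', zero_mul]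
        | cons b u =>
          cases w with
          | nil =>
            rw [sWord_cons s a (by simp), star_mul, mul_assoc]
            show _ * (star (s a) * s c) = 0
            rw [hac', mul_zero]
          | cons b' u' =>
            rw [sWord_cons s a (by simp), sWord_cons s c (by simp), star_mul, mul_assoc,
              ← mul_assoc (star (s a)), hac', zero_mul, mul_zero]

end RepAux
theorem rep_product_formula {V E A : Type*} [Countable V] [Countable E]
    {B : Type*} [NonUnitalCStarAlgebra B]
    (G : LabelledGraph V E A) (C : Set (Set V))
    (hC : G.Accommodating C) (hwlr : G.WeaklyLeftResolving C)
    (p : Set V → B) (s : A → B) (hrep : G.IsRepresentation C p s)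
    (α β γ δ : List A) (hα : α ∈ G.language) (hβ : β ∈ G.language)
    (hγ : γ ∈ G.language) (hδ : δ ∈ G.language)
    (S T : Set V) (hS : S ∈ C) (hT : T ∈ C)
    (hSsub : S ⊆ G.rngSet α ∩ G.rngSet β) (hTsub : T ⊆ G.rngSet γ ∩ G.rngSet δ) :
    (∀ γ' : List A, γ' ≠ [] → γ = β ++ γ' →
      (sWord s α * p S * star (sWord s β)) * (sWord s γ * p T * star (sWord s δ)) =
        sWord s (α ++ γ') * p (G.relRng S γ' ∩ T) * star (sWord s δ)) ∧
    (∀ β' : List A, β' ≠ [] → β = γ ++ β' →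
      (sWord s α * p S * star (sWord s β)) * (sWord s γ * p T * star (sWord s δ)) =
        sWord s α * p (S ∩ G.relRng T β') * star (sWord s (δ ++ β'))) ∧
    (β = γ →
      (sWord s α * p S * star (sWord s β)) * (sWord s γ * p T * star (sWord s δ)) =
        sWord s α * p (S ∩ T) * star (sWord s δ)) ∧
    (¬ β <+: γ → ¬ γ <+: β →
      (sWord s α * p S * star (sWord s β)) * (sWord s γ * p T * star (sWord s δ)) = 0) := by
  have hαne : α ≠ [] := LabelledGraph.lang_ne_nil hα
  have hβne : β ≠ [] := LabelledGraph.lang_ne_nil hβ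
  have hγne : γ ≠ [] := LabelledGraph.lang_ne_nil hγ
  have hδne : δ ≠ [] := LabelledGraph.lang_ne_nil hδ
  have hrβ : G.rngSet β ∈ C := hC.rng_mem β hβ
  have hrγ : G.rngSet γ ∈ C := hC.rng_mem γ hγ
  have keyS : p S * p (G.rngSet β) = p S := by
    rw [hrep.p_inter S hS _ hrβ,
      Set.inter_eq_self_of_subset_left (fun x hx => (hSsub hx).2)]
  have keyT : p (G.rngSet γ) * p T = p T := by
    rw [hrep.p_inter _ hrγ T hT,
      Set.inter_eq_self_of_subset_right (fun x hx => (hTsub hx).1)]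
  have habc : ∀ x y z u v w : B, (x * y * z) * (u * v * w) = x * (y * (z * u) * v) * w := by
    intros; simp only [mul_assoc]
  refine ⟨?_, ?_, ?_, ?_⟩
  · -- γ = β ++ γ'
    rintro γ' hγ'ne rfl
    have hγ'lang : γ' ∈ G.language := (LabelledGraph.lang_split hγ hβne hγ'ne).2
    have hrel : G.relRng S γ' ∈ C := hC.relRng_mem S hS γ' hγ'lang
    have e1 : star (sWord s β) * sWord s (β ++ γ') = p (G.rngSet β) * sWord s γ' := by
      rw [sWord_append s hβne hγ'ne, ← mul_assoc, star_sWord_mul_sWord hC hrep hβ]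
    rw [habc, e1, ← mul_assoc (p S), keyS, p_mul_sWord hC hrep hγ'lang hS,
      mul_assoc (sWord s γ'), hrep.p_inter _ hrel T hT, ← mul_assoc (sWord s α),
      ← sWord_append s hαne hγ'ne]
  · -- β = γ ++ β'
    rintro β' hβ'ne rfl
    have hβ'lang : β' ∈ G.language := (LabelledGraph.lang_split hβ hγne hβ'ne).2
    have hrelT : G.relRng T β' ∈ C := hC.relRng_mem T hT β' hβ'lang
    have e1 : star (sWord s (γ ++ β')) * sWord s γ = star (sWord s β') * p (G.rngSet γ) := by
      rw [sWord_append s hγne hβ'ne, star_mul, mul_assoc, star_sWord_mul_sWord hC hrep hγ]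
    have e2 : star (sWord s β') * p T = p (G.relRng T β') * star (sWord s β') := by
      have h3 : star (sWord s β') * p T = star (p T * sWord s β') := by
        rw [star_mul, hrep.p_star T hT]
      rw [h3, p_mul_sWord hC hrep hβ'lang hT, star_mul, hrep.p_star _ hrelT]
    rw [habc, e1, mul_assoc (p S), mul_assoc (star (sWord s β')), keyT, e2,
      ← mul_assoc (p S), hrep.p_inter S hS _ hrelT, ← mul_assoc (sWord s α),
      mul_assoc (sWord s α * p (S ∩ G.relRng T β')), ← star_mul,
      ← sWord_append s hδne hβ'ne]
  · -- β = γ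
    rintro rfl
    rw [habc, star_sWord_mul_sWord hC hrep hβ, keyS, hrep.p_inter S hS T hT]
  · -- incomparable
    intro h1 h2
    rw [habc, star_sWord_mul_sWord_orth hC hrep hβ hγ h1 h2, mul_zero, zero_mul,
      mul_zero, zero_mul]
end

section
/- Let (E,π,𝒞) be a weakly left-resolving labelled space over a finite alphabet 𝒜 such that E has no sinks, and let {s_a, p_A} be a representation of (E,π,𝒞) in a C*-algebra B. Then u := Σ_{a ∈ ℒ¹(E,π)} s_a s_a* satisfies ux = x = xu for every x in the C*-subalgebra of B generated by {s_a, p_A}; i.e. u is a unit for that C*-subalgebra. -/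
theorem rep_unit {V E A : Type*} [Countable V] [Countable E] [Finite A]
    {B : Type*} [NonUnitalCStarAlgebra B]
    (G : LabelledGraph V E A) (C : Set (Set V))
    (hC : G.Accommodating C) (hwlr : G.WeaklyLeftResolving C)
    (hns : ∀ v : V, ¬ G.IsSink v)
    (p : Set V → B) (s : A → B) (hrep : G.IsRepresentation C p s) :
    ∀ x ∈ genCStar B ({ x | ∃ a, [a] ∈ G.language ∧ x = s a } ∪ { x | ∃ S ∈ C, x = p S }),
      (∑ᶠ a ∈ { a | [a] ∈ G.language }, s a * star (s a)) * x = x ∧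
      x * (∑ᶠ a ∈ { a | [a] ∈ G.language }, s a * star (s a)) = x := by
  classical
  have hfin : ({ a | [a] ∈ G.language } : Set A).Finite := Set.toFinite _
  set F : Finset A := hfin.toFinset with hF
  set u : B := ∑ a ∈ F, s a * star (s a) with hu
  have hurw : (∑ᶠ a ∈ { a | [a] ∈ G.language }, s a * star (s a)) = u := by
    rw [hu, ← finsum_mem_coe_finset]
    congr 1
    simp [hF]
  have hmemF : ∀ a, [a] ∈ G.language → a ∈ F := fun a ha => hfin.mem_toFinset.mpr ha
  have hmemF' : ∀ a ∈ F, [a] ∈ G.language := fun a ha => hfin.mem_toFinset.mp ha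
  -- u s_a = s_a
  have hus : ∀ a, [a] ∈ G.language → u * s a = s a := by
    intro a ha
    rw [hu, Finset.sum_mul, Finset.sum_eq_single a]
    · exact hrep.s_partialIsometry a ha
    · intro b hb hne
      rw [mul_assoc, hrep.s_orth b a (hmemF' b hb) ha hne, mul_zero]
    · intro h; exact absurd (hmemF a ha) h
  -- s_a p_{r(a)} = s_a
  have hsp : ∀ a, [a] ∈ G.language → s a * p (G.rngSet [a]) = s a := by
    intro a ha
    rw [← hrep.star_s_mul_s a ha, ← mul_assoc, hrep.s_partialIsometry a ha]
  -- relRng S [a] = ∅ for a ∉ L1 S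
  have hrel_empty : ∀ S : Set V, ∀ a, a ∉ G.L1 S → G.relRng S [a] = ∅ := by
    intro S a ha
    ext v
    simp only [Set.mem_empty_iff_false, iff_false]
    rintro ⟨l, h, hlbl, hsrc, hrng⟩
    exact ha ⟨G.src (l.head h.1), hsrc, l, h, hlbl, rfl⟩
  -- L1 S ⊆ language letters
  have hL1sub : ∀ S : Set V, G.L1 S ⊆ { a | [a] ∈ G.language } := by
    rintro S a ⟨v, hvS, l, h, hlbl, hsrc⟩
    exact ⟨l, h, hlbl⟩
  -- p_S u = p_S
  have hpu : ∀ S ∈ C, p S * u = p S := by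
    intro S hS
    have hterm : ∀ a ∈ F, p S * (s a * star (s a)) = s a * p (G.relRng S [a]) * star (s a) := by
      intro a ha
      rw [← mul_assoc, hrep.p_mul_s S hS a (hmemF' a ha)]
    rw [hu, Finset.mul_sum, Finset.sum_congr rfl hterm]
    by_cases hne : (G.L1 S).Nonempty
    · have hL1fin : (G.L1 S).Finite := hfin.subset (hL1sub S)
      rw [hrep.cuntz_krieger S hS hL1fin hne]
      apply (Finset.sum_subset _ _).symm
      · intro a ha
        exact hmemF a (hL1sub S (hL1fin.mem_toFinset.mp ha))
      · intro a _ ha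
        rw [hrel_empty S a (fun h => ha (hL1fin.mem_toFinset.mpr h)), hrep.p_empty,
          mul_zero, zero_mul]
    · -- L1 S empty forces S = ∅ (no sinks)
      have hSempty : S = ∅ := by
        ext v
        simp only [Set.mem_empty_iff_false, iff_false]
        intro hv
        obtain ⟨e, he⟩ : ∃ e : E, G.src e = v := by
          have := hns v
          unfold LabelledGraph.IsSink at this
          push_neg at this
          exact this
        refine hne ⟨G.lbl e, ⟨v, hv, [e], ⟨List.cons_ne_nil _ _, List.isChain_singleton _⟩,
          rfl, he⟩⟩
      subst hSempty
      rw [hrep.p_empty]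
      rw [Finset.sum_eq_zero]
      intro a _
      rw [hrel_empty ∅ a, hrep.p_empty, mul_zero, zero_mul]
      rintro ⟨v, hv, -⟩
      exact hv
  -- star u = u
  have hustar : star u = u := by
    rw [hu, star_sum]
    exact Finset.sum_congr rfl fun a _ => by rw [star_mul, star_star]
  -- u p_S = p_S
  have hup : ∀ S ∈ C, u * p S = p S := by
    intro S hS
    have := congrArg star (hpu S hS)
    rwa [star_mul, hustar, hrep.p_star S hS] at this
  -- s_a u = s_a
  have hsu : ∀ a, [a] ∈ G.language → s a * u = s a := by
    intro a ha
    rw [← hsp a ha, mul_assoc, hpu _ (hC.rng_mem [a] ha), hsp a ha]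
  intro x hx
  have hclosed : IsClosed {y : B | u * y = y ∧ y * u = y} :=
    (isClosed_eq (continuous_mul_left u) continuous_id).inter
      (isClosed_eq (continuous_mul_right u) continuous_id)
  have hsub : (NonUnitalStarAlgebra.adjoin ℂ
      ({ x | ∃ a, [a] ∈ G.language ∧ x = s a } ∪ { x | ∃ S ∈ C, x = p S }) : Set B) ⊆
      {y : B | u * y = y ∧ y * u = y} := by
    intro y hy
    induction hy using NonUnitalStarAlgebra.adjoin_induction with
    | mem z hz =>
      rcases hz with ⟨a, ha, rfl⟩ | ⟨S, hS, rfl⟩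
      · exact ⟨hus a ha, hsu a ha⟩
      · exact ⟨hup S hS, hpu S hS⟩
    | add x y hx hy ihx ihy =>
      exact ⟨by rw [mul_add, ihx.1, ihy.1], by rw [add_mul, ihx.2, ihy.2]⟩
    | zero => exact ⟨mul_zero u, zero_mul u⟩
    | mul x y hx hy ihx ihy =>
      exact ⟨by rw [← mul_assoc, ihx.1], by rw [mul_assoc, ihy.2]⟩
    | smul r x hx ihx =>
      exact ⟨by rw [mul_smul_comm, ihx.1], by rw [smul_mul_assoc, ihx.2]⟩
    | star x hx ihx =>
      constructor
      · have := congrArg star ihx.2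
        rwa [star_mul, hustar] at this
      · have := congrArg star ihx.1
        rwa [star_mul, hustar] at this
  have := closure_minimal hsub hclosed hx
  rw [hurw]
  exact this
end
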